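/- arXiv:1303.3491 — 2 statements merged into one kernel-verified Lean document; each statement's English description precedes it below -/
import Mathlib

section
/- Let n ≥ 1 and σ ∈ B_n. Then the diagonal signed descent monomial c_σ is ordered, i.e., c_σ ∈ 𝒪_n: writing c_σ = x^p y^q with p_i = f_i(σ^{-1}) and q_i = f_{|σ^{-1}(i)|}(σ), one has p_k + q_k even for all k, p_1 ≥ p_2 ≥ ⋯ ≥ p_n, and whenever p_i = p_{i+1}: if p_i is even then q_i ≥ q_{i+1}, and if p_i is odd then q_i ≤ q_{i+1}. -/
open MvPolynomial

/-- The hyperoctahedral group `Bₙ`, realized as the subgroup of permutations of `ℤ`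
that commute with negation and fix every integer of absolute value greater than `n`.
Such a permutation restricts to a bijection `σ` of `{-n,…,-1,1,…,n}` with
`σ(-k) = -σ(k)`, and every such bijection arises from a unique element. -/
def HOct (n : ℕ) : Subgroup (Equiv.Perm ℤ) where
  carrier := {σ | (∀ k : ℤ, σ (-k) = -(σ k)) ∧ ∀ k : ℤ, (n : ℤ) < |k| → σ k = k}
  one_mem' := by
    refine ⟨fun k => rfl, fun k _ => rfl⟩
  mul_mem' := by
    rintro σ τ ⟨hσ1, hσ2⟩ ⟨hτ1, hτ2⟩
    refine ⟨fun k => ?_, fun k hk => ?_⟩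
    · simp [Equiv.Perm.mul_apply, hτ1, hσ1]
    · simp [Equiv.Perm.mul_apply, hτ2 k hk, hσ2 k hk]
  inv_mem' := by
    rintro σ ⟨h1, h2⟩
    refine ⟨fun k => ?_, fun k hk => ?_⟩
    · apply σ.injective
      rw [Equiv.Perm.inv_def, Equiv.apply_symm_apply, h1, Equiv.apply_symm_apply]
    · have h := h2 k hk
      nth_rewrite 1 [← h]
      rw [Equiv.Perm.inv_def, Equiv.symm_apply_apply]

/-- The descent set `Des(σ) = {1 ≤ i ≤ n-1 : σ(i) > σ(i+1)}`. -/
def DesB (n : ℕ) (σ : Equiv.Perm ℤ) : Finset ℕ :=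
  (Finset.Ico 1 n).filter fun i => σ ((i : ℤ) + 1) < σ (i : ℤ)

/-- `d_i(σ) = #{j ∈ Des(σ) : j ≥ i}`. -/
def dB (n : ℕ) (σ : Equiv.Perm ℤ) (i : ℕ) : ℕ :=
  ((DesB n σ).filter fun j => i ≤ j).card

/-- `ε_i(σ)`: `1` if `σ(i) < 0`, `0` otherwise. -/
def epsB (σ : Equiv.Perm ℤ) (i : ℕ) : ℕ := if σ (i : ℤ) < 0 then 1 else 0

/-- `f_i(σ) = 2 d_i(σ) + ε_i(σ)`. -/
def fB (n : ℕ) (σ : Equiv.Perm ℤ) (i : ℕ) : ℕ := 2 * dB n σ i + epsB σ i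

/-- The sign `σ(k)/|σ(k)|` as a rational number. -/
def sgnQ (σ : Equiv.Perm ℤ) (k : ℤ) : ℚ := if σ k < 0 then -1 else 1

/-- For `i : Fin n` (representing the index `i+1 ∈ {1,…,n}`), the element of `Fin n`
representing `|σ(i+1)| ∈ {1,…,n}`. -/
def sIdx {n : ℕ} (σ : Equiv.Perm ℤ) (i : Fin n) : Fin n :=
  ⟨((σ ((i : ℕ) + 1 : ℤ)).natAbs - 1) % n, Nat.mod_lt _ i.pos⟩

/-- The diagonal action of a signed permutation on `ℚ[x₁,…,xₙ,y₁,…,yₙ]`: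
`x_k ↦ (σ(k)/|σ(k)|)·x_{|σ(k)|}` and `y_k ↦ (σ(k)/|σ(k)|)·y_{|σ(k)|}`.
Here `Sum.inl i` is the variable `x_{i+1}` and `Sum.inr i` is `y_{i+1}`. -/
noncomputable def actXY (n : ℕ) (σ : Equiv.Perm ℤ) :
    MvPolynomial (Fin n ⊕ Fin n) ℚ →ₐ[ℚ] MvPolynomial (Fin n ⊕ Fin n) ℚ :=
  aeval (Sum.elim
    (fun i => C (sgnQ σ ((i : ℕ) + 1 : ℤ)) * X (Sum.inl (sIdx σ i)))
    (fun i => C (sgnQ σ ((i : ℕ) + 1 : ℤ)) * X (Sum.inr (sIdx σ i))))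

/-- Action of a signed permutation on the `x`-variables only. -/
noncomputable def actX (n : ℕ) (σ : Equiv.Perm ℤ) :
    MvPolynomial (Fin n ⊕ Fin n) ℚ →ₐ[ℚ] MvPolynomial (Fin n ⊕ Fin n) ℚ :=
  aeval (Sum.elim
    (fun i => C (sgnQ σ ((i : ℕ) + 1 : ℤ)) * X (Sum.inl (sIdx σ i)))
    (fun i => X (Sum.inr i)))

/-- Action of a signed permutation on the `y`-variables only. -/
noncomputable def actY (n : ℕ) (σ : Equiv.Perm ℤ) :
    MvPolynomial (Fin n ⊕ Fin n) ℚ →ₐ[ℚ] MvPolynomial (Fin n ⊕ Fin n) ℚ :=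
  aeval (Sum.elim
    (fun i => X (Sum.inl i))
    (fun i => C (sgnQ σ ((i : ℕ) + 1 : ℤ)) * X (Sum.inr (sIdx σ i))))

/-- The averaging operator `ρ(f) = (1/|Bₙ|) ∑_{σ ∈ Bₙ} σ·f`. -/
noncomputable def rho (n : ℕ) (f : MvPolynomial (Fin n ⊕ Fin n) ℚ) :
    MvPolynomial (Fin n ⊕ Fin n) ℚ :=
  (Nat.card ↥(HOct n) : ℚ)⁻¹ • ∑ᶠ σ : ↥(HOct n), actXY n (σ : Equiv.Perm ℤ) f

/-- The diagonal signed descent monomial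
`c_σ = ∏_{i=1}^n x_i^{f_i(σ⁻¹)} y_i^{f_{|σ⁻¹(i)|}(σ)}`. -/
noncomputable def cMon (n : ℕ) (σ : Equiv.Perm ℤ) : MvPolynomial (Fin n ⊕ Fin n) ℚ :=
  ∏ i : Fin n,
    (X (Sum.inl i) ^ fB n σ⁻¹ ((i : ℕ) + 1) *
      X (Sum.inr i) ^ fB n σ ((σ⁻¹ ((i : ℕ) + 1 : ℤ)).natAbs))

/-- The monomial `x^p y^q`. -/
noncomputable def monXY (n : ℕ) (p q : Fin n → ℕ) : MvPolynomial (Fin n ⊕ Fin n) ℚ :=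
  (∏ i : Fin n, X (Sum.inl i) ^ p i) * ∏ i : Fin n, X (Sum.inr i) ^ q i

/-- The monomial `x^p y^q` is ordered (belongs to `𝒪ₙ`). -/
def OrderedMon (n : ℕ) (p q : Fin n → ℕ) : Prop :=
  (∀ k, Even (p k + q k)) ∧ Antitone p ∧
  (∀ (i : Fin n) (h : (i : ℕ) + 1 < n),
    p i = p ⟨(i : ℕ) + 1, h⟩ → Even (p i) → q ⟨(i : ℕ) + 1, h⟩ ≤ q i) ∧
  (∀ (i : Fin n) (h : (i : ℕ) + 1 < n),
    p i = p ⟨(i : ℕ) + 1, h⟩ → Odd (p i) → q i ≤ q ⟨(i : ℕ) + 1, h⟩)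

/-- `σ` is the signed index permutation of a monomial with `y`-exponent sequence `q`:
(1) `q_{|σ(1)|} ≥ ⋯ ≥ q_{|σ(n)|}`; (2) ties `q_{|σ(i)|} = q_{|σ(j)|}` (`i < j`) force
`σ(i) < σ(i+1) < ⋯ < σ(j)`; (3) `q_{|σ(i)|}` is even iff `σ(i) > 0`. -/
def IsSignedIndexPerm (n : ℕ) (q : Fin n → ℕ) (σ : Equiv.Perm ℤ) : Prop :=
  σ ∈ HOct n ∧
  Antitone (fun i : Fin n => q (sIdx σ i)) ∧
  (∀ i j : Fin n, i < j → q (sIdx σ i) = q (sIdx σ j) →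
    ∀ k l : Fin n, i ≤ k → k < l → l ≤ j →
      σ ((k : ℕ) + 1 : ℤ) < σ ((l : ℕ) + 1 : ℤ)) ∧
  (∀ i : Fin n, Even (q (sIdx σ i)) ↔ 0 < σ ((i : ℕ) + 1 : ℤ))

/-- `𝔰(q) = q` if `q` is even, `-q` if `q` is odd. -/
def sFun (q : ℕ) : ℤ := if Even q then (q : ℤ) else -(q : ℤ)

/-- The decreasing rearrangement `𝔬(q)` of a sequence `q`. -/
def oArr {n : ℕ} (q : Fin n → ℕ) : Fin n → ℕ := fun i => q (Tuple.sort q i.rev)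

/-- Strict lexicographic comparison of sequences. -/
def LexLT {n : ℕ} {α : Type*} [LT α] (a b : Fin n → α) : Prop :=
  ∃ i, (∀ j, j < i → a j = b j) ∧ a i < b i

/-- The monomial `x^{p'} y^{q'}` strictly precedes `x^p y^q` in the total order `≼` on
ordered monomials: either `𝔬(x^{p'}y^{q'}) <_ℓ 𝔬(x^p y^q)` lexicographically, or the
`𝔬`-data agree and `(p', 𝔰(q')) <_ℓ (p, 𝔰(q))` lexicographically. -/
def MonPrec {n : ℕ} (p' q' p q : Fin n → ℕ) : Prop :=
  LexLT (oArr p') (oArr p) ∨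
  (oArr p' = oArr p ∧ LexLT (oArr q') (oArr q)) ∨
  (oArr p' = oArr p ∧ oArr q' = oArr q ∧
    (LexLT p' p ∨ (p' = p ∧ LexLT (fun i => sFun (q' i)) (fun i => sFun (q i)))))

/-- The monomial symmetric polynomial `m_{2ν}(x) = ∑_{[α] ∈ Σₙ/Σₙ(ν)} x^{2α(ν)}`,
i.e. the sum of all distinct monomials `x^{2w}` with `w` a rearrangement of `ν`. -/
noncomputable def mSymX (n : ℕ) (ν : Fin n → ℕ) : MvPolynomial (Fin n ⊕ Fin n) ℚ :=
  ∑ w ∈ Finset.image (fun α : Equiv.Perm (Fin n) => ν ∘ α) Finset.univ,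
    ∏ i : Fin n, X (Sum.inl i) ^ (2 * w i)

/-- The monomial symmetric polynomial `m_{2μ}(y)`. -/
noncomputable def mSymY (n : ℕ) (μ : Fin n → ℕ) : MvPolynomial (Fin n ⊕ Fin n) ℚ :=
  ∑ w ∈ Finset.image (fun α : Equiv.Perm (Fin n) => μ ∘ α) Finset.univ,
    ∏ i : Fin n, X (Sum.inr i) ^ (2 * w i)

/-- The action of a signed permutation on `ℚ[x₁,…,xₙ]`:
`x_k ↦ (σ(k)/|σ(k)|)·x_{|σ(k)|}`. Here the variable `i : Fin n` is `x_{i+1}`. -/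
noncomputable def actB (n : ℕ) (σ : Equiv.Perm ℤ) :
    MvPolynomial (Fin n) ℚ →ₐ[ℚ] MvPolynomial (Fin n) ℚ :=
  aeval fun i => C (sgnQ σ ((i : ℕ) + 1 : ℤ)) * X (sIdx σ i)

/-- The signed descent monomial `b_σ = ∏_{i=1}^n x_i^{f_{|σ⁻¹(i)|}(σ)}`. -/
noncomputable def bMon (n : ℕ) (σ : Equiv.Perm ℤ) : MvPolynomial (Fin n) ℚ :=
  ∏ i : Fin n, X i ^ fB n σ ((σ⁻¹ ((i : ℕ) + 1 : ℤ)).natAbs)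

/-!
The map `i ↦ f_i(τ) = 2 d_i(τ) + ε_i(τ)` is antitone on `1, …, n`: at a descent `d` drops, and
otherwise `τ i < τ (i+1)` forces `ε_{i+1} ≤ ε_i`; for `τ = σ⁻¹` this gives `p_1 ≥ ⋯ ≥ p_n`.
Oddness of `σ` gives `ε_{|σ⁻¹ k|}(σ) = ε_k(σ⁻¹)`, whence `p_k ≡ q_k (mod 2)`. At a tie
`p_i = p_{i+1}` there is no descent of `σ⁻¹` at `i` and `σ⁻¹ i`, `σ⁻¹ (i+1)` have the same sign:
`|σ⁻¹ i| < |σ⁻¹ (i+1)|` if both are positive (`p_i` even) and the reverse if both are negative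
(`p_i` odd). Either way `q_i`, `q_{i+1}` are values of `f(σ)` at two positions with the same `ε`,
where `f` is antitone as `d` is.
-/

section Descents

variable (n : ℕ) (τ : Equiv.Perm ℤ)

lemma dB_antitone : Antitone (dB n τ) :=
  fun _ _ hij => Finset.card_le_card <| Finset.monotone_filter_right _ fun _ _ h => hij.trans h

lemma epsB_le_one (i : ℕ) : epsB τ i ≤ 1 := by
  unfold epsB; split <;> omega

variable {n τ}

lemma dB_succ_lt_of_mem_desB {j : ℕ} (hj : j ∈ DesB n τ) : dB n τ (j + 1) < dB n τ j := by
  refine Finset.card_lt_card ⟨Finset.monotone_filter_right _ fun _ _ h => by omega, fun h => ?_⟩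
  simpa using (Finset.mem_filter.mp (h (Finset.mem_filter.mpr ⟨hj, le_rfl⟩))).2

lemma epsB_eq_zero_iff {i : ℕ} : epsB τ i = 0 ↔ 0 ≤ τ i := by
  unfold epsB; split <;> simp_all

lemma epsB_eq_one_iff {i : ℕ} : epsB τ i = 1 ↔ τ i < 0 := by
  unfold epsB; split <;> simp_all

lemma even_fB_iff {i : ℕ} : Even (fB n τ i) ↔ epsB τ i = 0 := by
  have := epsB_le_one τ i
  rw [fB, Nat.even_add, iff_true_intro (even_two_mul _), true_iff, Nat.even_iff]
  omega

lemma fB_le_fB_of_epsB_eq {i j : ℕ} (hij : i ≤ j) (he : epsB τ i = epsB τ j) :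
    fB n τ j ≤ fB n τ i := by
  have := dB_antitone n τ hij
  unfold fB
  omega

lemma fB_succ_le {j : ℕ} (h1 : 1 ≤ j) (h2 : j < n) : fB n τ (j + 1) ≤ fB n τ j := by
  by_cases hdes : j ∈ DesB n τ
  · have := dB_succ_lt_of_mem_desB hdes
    have := epsB_le_one τ (j + 1)
    unfold fB
    omega
  · have hle : τ j ≤ τ (j + 1) := by
      simpa [DesB, h1, h2] using hdes
    have : epsB τ (j + 1) ≤ epsB τ j := by
      unfold epsB; push_cast; split_ifs <;> omega
    have := dB_antitone n τ (by omega : j ≤ j + 1)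
    unfold fB
    omega

lemma fB_antitoneOn : AntitoneOn (fB n τ) (Set.Icc 1 n) := by
  rintro i ⟨hi, -⟩ j ⟨-, hj⟩ hij
  induction j, hij using Nat.le_induction with
  | base => exact le_rfl
  | succ j hij ih => exact (fB_succ_le (hi.trans hij) hj).trans (ih (by omega))

lemma le_and_epsB_eq_of_fB_eq {j : ℕ} (h1 : 1 ≤ j) (h2 : j < n)
    (htie : fB n τ j = fB n τ (j + 1)) : τ j ≤ τ (j + 1) ∧ epsB τ j = epsB τ (j + 1) := by
  -- a descent at `j` lowers `2 d` by at least 2, more than `ε` can make up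
  have hdes : j ∉ DesB n τ := fun hdes => by
    have := dB_succ_lt_of_mem_desB hdes
    have := epsB_le_one τ (j + 1)
    unfold fB at htie
    omega
  have := dB_antitone n τ (by omega : j ≤ j + 1)
  have := epsB_le_one τ j
  have := epsB_le_one τ (j + 1)
  unfold fB at htie
  exact ⟨by simpa [DesB, h1, h2] using hdes, by omega⟩

end Descents

lemma epsB_natAbs_inv {σ : Equiv.Perm ℤ} (hσ : Function.Odd σ) {k : ℕ} (hk : 0 < k) :
    epsB σ (σ⁻¹ k).natAbs = epsB σ⁻¹ k := by
  have happ : σ (σ⁻¹ k) = k := σ.apply_symm_apply k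
  have hne : σ⁻¹ k ≠ 0 := fun h => by
    rw [h, hσ.map_zero] at happ
    omega
  unfold epsB
  rcases hne.lt_or_gt with hneg | hpos
  · rw [Int.natCast_natAbs, abs_of_neg hneg, hσ, happ, if_pos (by omega), if_pos hneg]
  · rw [Int.natCast_natAbs, abs_of_pos hpos, happ, if_neg (by omega), if_neg hpos.not_gt]

section Ties

variable {n : ℕ} {σ : Equiv.Perm ℤ} {j : ℕ}

lemma fB_natAbs_inv_succ_le_of_even (hσ : Function.Odd σ) (h1 : 1 ≤ j) (h2 : j < n)
    (htie : fB n σ⁻¹ j = fB n σ⁻¹ (j + 1)) (heven : Even (fB n σ⁻¹ j)) :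
    fB n σ (σ⁻¹ (j + 1 : ℕ)).natAbs ≤ fB n σ (σ⁻¹ j).natAbs := by
  obtain ⟨hle, heps⟩ := le_and_epsB_eq_of_fB_eq h1 h2 htie
  have ha := epsB_eq_zero_iff.mp (even_fB_iff.mp heven)
  have hb := epsB_eq_zero_iff.mp (heps ▸ even_fB_iff.mp heven)
  refine fB_le_fB_of_epsB_eq (by push_cast at hb ⊢; omega) ?_
  rw [epsB_natAbs_inv hσ (by omega), epsB_natAbs_inv hσ (by omega), heps]

lemma fB_natAbs_inv_le_succ_of_odd (hσ : Function.Odd σ) (h1 : 1 ≤ j) (h2 : j < n)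
    (htie : fB n σ⁻¹ j = fB n σ⁻¹ (j + 1)) (hodd : Odd (fB n σ⁻¹ j)) :
    fB n σ (σ⁻¹ j).natAbs ≤ fB n σ (σ⁻¹ (j + 1 : ℕ)).natAbs := by
  obtain ⟨hle, heps⟩ := le_and_epsB_eq_of_fB_eq h1 h2 htie
  have hone : epsB σ⁻¹ j = 1 := by
    have := epsB_le_one σ⁻¹ j
    rw [← Nat.not_even_iff_odd, even_fB_iff] at hodd
    omega
  have ha := epsB_eq_one_iff.mp hone
  have hb := epsB_eq_one_iff.mp (heps ▸ hone)
  refine fB_le_fB_of_epsB_eq (by push_cast at hb ⊢; omega) ?_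
  rw [epsB_natAbs_inv hσ (by omega), epsB_natAbs_inv hσ (by omega), heps]

end Ties

theorem cMon_ordered_general (n : ℕ) (σ : Equiv.Perm ℤ) (hσ : σ ∈ HOct n) :
    OrderedMon n (fun i : Fin n => fB n σ⁻¹ ((i : ℕ) + 1))
      (fun i : Fin n => fB n σ ((σ⁻¹ ((i : ℕ) + 1 : ℤ)).natAbs)) := by
  have hodd : Function.Odd σ := hσ.1
  refine ⟨fun k => ?_, fun i j hij => ?_, fun i h htie heven => ?_, fun i h htie hodd' => ?_⟩
  · show Even (fB n σ⁻¹ (k + 1) + fB n σ (σ⁻¹ (k + 1 : ℕ)).natAbs)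
    rw [Nat.even_add, even_fB_iff, even_fB_iff, epsB_natAbs_inv hodd (Nat.succ_pos (k : ℕ))]
  · exact fB_antitoneOn ⟨by omega, by omega⟩ ⟨by omega, by omega⟩ (Nat.succ_le_succ hij)
  · exact fB_natAbs_inv_succ_le_of_even hodd (Nat.le_add_left 1 i) h htie heven
  · exact fB_natAbs_inv_le_succ_of_odd hodd (Nat.le_add_left 1 i) h htie hodd'

/-- For every `σ ∈ Bₙ`, the diagonal signed descent monomial `c_σ`, with exponents
`p_i = f_i(σ⁻¹)` and `q_i = f_{|σ⁻¹(i)|}(σ)`, is an ordered monomial (lies in `𝒪ₙ`). -/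
theorem cMon_ordered (n : ℕ) (hn : 1 ≤ n) (σ : Equiv.Perm ℤ) (hσ : σ ∈ HOct n) :
    OrderedMon n (fun i : Fin n => fB n σ⁻¹ ((i : ℕ) + 1))
      (fun i : Fin n => fB n σ ((σ⁻¹ ((i : ℕ) + 1 : ℤ)).natAbs)) :=
  cMon_ordered_general n σ hσ
end

section
/- Let n ≥ 1, let p = (p_1,…,p_n) and q = (q_1,…,q_n) be sequences of non-negative integers with p_k + q_k even for all 1 ≤ k ≤ n, and let m(x,y) = x^p y^q. Then among the monomials appearing with nonzero coefficient in the polynomial ρ(m(x,y)) there is exactly one ordered monomial n(x,y) ∈ 𝒪_n, and moreover ρ(m(x,y)) = ρ(n(x,y)). -/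
open MvPolynomial

/-! Because `p_k + q_k` is even, the signs cancel and a signed permutation `σ` sends `x^p y^q` to
the rearranged monomial `x^{p ∘ π⁻¹} y^{q ∘ π⁻¹}`, where `π = |σ|`. Every `π ∈ Sₙ` arises this
way (transpositions lift to `Bₙ`), so the support of `ρ(x^p y^q)` consists of all rearrangements
`x^{p ∘ π} y^{q ∘ π}`, and `ρ` takes the same value on each of them. A rearrangement is ordered
exactly when its factors `x_i^{p_i} y_i^{q_i}` are sorted by `orderKey`; since `orderKey` is
injective, the sorted rearrangement is unique. -/

namespace HOct

variable {n : ℕ} {σ τ : Equiv.Perm ℤ}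

theorem apply_zero (hσ : σ ∈ HOct n) : σ 0 = 0 := by
  have h := hσ.1 0
  rw [neg_zero] at h
  omega

theorem apply_ne_zero (hσ : σ ∈ HOct n) {k : ℤ} (hk : k ≠ 0) : σ k ≠ 0 :=
  fun h => hk (σ.injective (h.trans (apply_zero hσ).symm))

theorem natAbs_apply_le (hσ : σ ∈ HOct n) {k : ℤ} (hk : k.natAbs ≤ n) :
    (σ k).natAbs ≤ n := by
  by_contra! h
  have hfix := hσ.2 (σ k) (by rw [Int.abs_eq_natAbs]; exact_mod_cast h)
  have := σ.injective hfix
  omega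

theorem natAbs_apply_natAbs (hσ : σ ∈ HOct n) (k : ℤ) :
    (σ k.natAbs).natAbs = (σ k).natAbs := by
  obtain ⟨m, rfl | rfl⟩ := Int.eq_nat_or_neg k <;> simp [hσ.1]

theorem sIdx_add_one (hσ : σ ∈ HOct n) (i : Fin n) :
    (sIdx σ i : ℕ) + 1 = (σ ((i : ℕ) + 1 : ℤ)).natAbs := by
  have hle := natAbs_apply_le hσ (k := (i : ℕ) + 1) (by omega)
  have hne := apply_ne_zero hσ (k := (i : ℕ) + 1) (by omega)
  simp only [sIdx]
  rw [Nat.mod_eq_of_lt (by omega)]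
  omega

theorem sIdx_mul (hσ : σ ∈ HOct n) (hτ : τ ∈ HOct n) (i : Fin n) :
    sIdx (σ * τ) i = sIdx σ (sIdx τ i) := by
  have hστ := sIdx_add_one (mul_mem hσ hτ) i
  have hσ' := sIdx_add_one hσ (sIdx τ i)
  have hτ' : ((sIdx τ i : ℕ) + 1 : ℤ) = (τ ((i : ℕ) + 1 : ℤ)).natAbs := by
    exact_mod_cast sIdx_add_one hτ i
  rw [hτ', natAbs_apply_natAbs hσ] at hσ'
  rw [Equiv.Perm.mul_apply] at hστ
  exact Fin.ext (by omega)

theorem sIdx_one (i : Fin n) : sIdx (1 : Equiv.Perm ℤ) i = i := by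
  have h : (((i : ℕ) : ℤ) + 1).natAbs - 1 = i := by omega
  exact Fin.ext (by simp [sIdx, h, Nat.mod_eq_of_lt i.2])

def absPerm : HOct n →* Equiv.Perm (Fin n) where
  toFun σ :=
    { toFun := sIdx σ
      invFun := sIdx σ⁻¹
      left_inv := fun i => by
        rw [← sIdx_mul (inv_mem σ.2) σ.2, inv_mul_cancel, sIdx_one]
      right_inv := fun i => by
        rw [← sIdx_mul σ.2 (inv_mem σ.2), mul_inv_cancel, sIdx_one] }
  map_one' := Equiv.ext sIdx_one
  map_mul' σ τ := Equiv.ext (sIdx_mul σ.2 τ.2)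

@[simp]
theorem absPerm_apply (σ : HOct n) (i : Fin n) : absPerm σ i = sIdx (σ : Equiv.Perm ℤ) i := rfl

instance : Finite (HOct n) := by
  classical
  let inBox : ℤ → Prop := fun k => k ∈ Finset.Icc (-(n : ℤ)) n
  let FixOutside := {f : Equiv.Perm ℤ // ∀ k, ¬inBox k → f k = k}
  have : Finite FixOutside := .of_equiv _ (Equiv.Perm.subtypeEquivSubtypePerm inBox)
  refine .of_injective (fun σ : HOct n => (⟨σ, fun k hk => σ.2.2 k ?_⟩ : FixOutside))
    fun σ τ h => Subtype.ext (congrArg Subtype.val h :)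
  · simp only [inBox, Finset.mem_Icc, not_and_or, not_le] at hk
    rw [lt_abs]
    omega

noncomputable instance : Fintype (HOct n) := Fintype.ofFinite _

theorem swap_mul_swap_neg_mem (i j : Fin n) :
    Equiv.swap ((i : ℕ) + 1 : ℤ) ((j : ℕ) + 1) * Equiv.swap (-((i : ℕ) + 1 : ℤ)) (-((j : ℕ) + 1))
      ∈ HOct n := by
  have hi := i.2
  have hj := j.2
  refine ⟨fun k => ?_, fun k hk => ?_⟩
  · simp only [Equiv.Perm.mul_apply, Equiv.swap_apply_def]
    split_ifs <;> omega
  · rw [lt_abs] at hk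
    simp only [Equiv.Perm.mul_apply, Equiv.swap_apply_def]
    split_ifs <;> omega

theorem absPerm_surjective : Function.Surjective (absPerm (n := n)) := by
  rw [← MonoidHom.range_eq_top, eq_top_iff, ← Equiv.Perm.closure_isSwap, Subgroup.closure_le]
  rintro _ ⟨i, j, -, rfl⟩
  refine ⟨⟨_, swap_mul_swap_neg_mem i j⟩, Equiv.ext fun k => Fin.ext ?_⟩
  have hk := sIdx_add_one (swap_mul_swap_neg_mem i j) k
  have := k.2
  simp only [absPerm_apply, Equiv.swap_apply_def, Equiv.Perm.mul_apply] at hk ⊢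
  split_ifs at hk ⊢ <;> simp_all [Fin.ext_iff] <;> omega

end HOct

noncomputable def expXY {n : ℕ} (p q : Fin n → ℕ) : (Fin n ⊕ Fin n) →₀ ℕ :=
  Finsupp.equivFunOnFinite.symm (Sum.elim p q)

section Action

variable {n : ℕ}

theorem monXY_eq_monomial (p q : Fin n → ℕ) : monXY n p q = monomial (expXY p q) 1 := by
  rw [monXY, monomial_eq, C_1, one_mul, Finsupp.prod_fintype _ _ fun _ => pow_zero _,
    Fintype.prod_sum_type]
  rfl

theorem monXY_eq_prod (p q : Fin n → ℕ) :
    monXY n p q = ∏ i, X (Sum.inl i) ^ p i * X (Sum.inr i) ^ q i :=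
  Finset.prod_mul_distrib.symm

theorem sgnQ_pow_of_even (σ : Equiv.Perm ℤ) (k : ℤ) {m : ℕ} (hm : Even m) : sgnQ σ k ^ m = 1 := by
  unfold sgnQ
  split_ifs
  · exact hm.neg_one_pow
  · exact one_pow m

theorem actXY_monXY (σ : HOct n) {p q : Fin n → ℕ} (h : ∀ k, Even (p k + q k)) :
    actXY n σ (monXY n p q) =
      monXY n (p ∘ ⇑(HOct.absPerm σ)⁻¹) (q ∘ ⇑(HOct.absPerm σ)⁻¹) := by
  rw [monXY_eq_prod, monXY_eq_prod, map_prod]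
  refine Fintype.prod_equiv (HOct.absPerm σ) _ _ fun i => ?_
  simp only [actXY, map_mul, map_pow, aeval_X, Sum.elim_inl, Sum.elim_inr, mul_pow,
    Function.comp_apply, ← HOct.absPerm_apply, Equiv.Perm.inv_def, Equiv.symm_apply_apply]
  rw [mul_mul_mul_comm, ← pow_add, ← map_pow, sgnQ_pow_of_even _ _ (h i), C_1, one_mul]

end Action

section Average

variable {n : ℕ}

theorem rho_monXY {p q : Fin n → ℕ} (h : ∀ k, Even (p k + q k)) :
    rho n (monXY n p q) = (Nat.card (HOct n) : ℚ)⁻¹ •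
      ∑ σ : HOct n, monXY n (p ∘ ⇑(HOct.absPerm σ)⁻¹) (q ∘ ⇑(HOct.absPerm σ)⁻¹) := by
  rw [rho, finsum_eq_sum_of_fintype]
  simp only [actXY_monXY _ h]

theorem rho_monXY_comp {p q : Fin n → ℕ} (h : ∀ k, Even (p k + q k)) (τ : Equiv.Perm (Fin n)) :
    rho n (monXY n (p ∘ τ) (q ∘ τ)) = rho n (monXY n p q) := by
  rw [rho_monXY (p := p ∘ τ) (q := q ∘ τ) fun k => h (τ k), rho_monXY h]
  obtain ⟨t, rfl⟩ := HOct.absPerm_surjective τ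
  congr 1
  refine Fintype.sum_equiv (Equiv.mulRight t⁻¹) _ _ fun σ => ?_
  simp [Function.comp_assoc]

theorem mem_support_rho_monXY {p q : Fin n → ℕ} (h : ∀ k, Even (p k + q k))
    (d : (Fin n ⊕ Fin n) →₀ ℕ) :
    d ∈ (rho n (monXY n p q)).support ↔ ∃ π : Equiv.Perm (Fin n), expXY (p ∘ π) (q ∘ π) = d := by
  have hcard : (Nat.card (HOct n) : ℚ)⁻¹ ≠ 0 := inv_ne_zero (Nat.cast_ne_zero.2 Nat.card_pos.ne')
  rw [rho_monXY h]
  simp only [monXY_eq_monomial, mem_support_iff, coeff_smul, coeff_sum,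
    coeff_monomial, Finset.sum_boole, smul_eq_mul, mul_ne_zero_iff,
    Nat.cast_ne_zero, Finset.card_ne_zero, Finset.filter_nonempty_iff, Finset.mem_univ, true_and]
  rw [and_iff_right hcard]
  refine ⟨fun ⟨σ, hσ⟩ => ⟨_, hσ⟩, fun ⟨π, hπ⟩ => ?_⟩
  obtain ⟨σ, hσ⟩ := HOct.absPerm_surjective π⁻¹
  exact ⟨σ, by rwa [hσ, inv_inv]⟩

end Average

def orderKey (e : ℕ × ℕ) : ℤ ×ₗ ℤ :=
  toLex (-(e.1 : ℤ), if Even e.1 then -(e.2 : ℤ) else e.2)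

theorem orderKey_injective : Function.Injective orderKey := by
  rintro ⟨a₁, a₂⟩ ⟨b₁, b₂⟩ h
  simp only [orderKey, toLex_inj, Prod.mk.injEq, neg_inj, Nat.cast_inj] at h
  obtain ⟨rfl, h⟩ := h
  split_ifs at h <;> simp_all

theorem orderKey_le_orderKey_iff {a b : ℕ × ℕ} :
    orderKey a ≤ orderKey b ↔
      b.1 < a.1 ∨ a.1 = b.1 ∧ (Even a.1 → b.2 ≤ a.2) ∧ (Odd a.1 → a.2 ≤ b.2) := by
  simp only [orderKey, Prod.Lex.toLex_le_toLex, neg_lt_neg_iff, Nat.cast_lt, neg_inj,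
    Nat.cast_inj, ← Nat.not_even_iff_odd]
  refine or_congr Iff.rfl (and_congr_right fun h => ?_)
  rw [← h]
  split_ifs <;> simp_all

theorem orderedMon_iff {n : ℕ} {p q : Fin n → ℕ} :
    OrderedMon n p q ↔ (∀ k, Even (p k + q k)) ∧ Monotone fun i => orderKey (p i, q i) := by
  refine and_congr_right fun _ => ⟨fun ⟨hanti, heven, hodd⟩ => ?_, fun hmono => ?_⟩
  · obtain _ | m := n
    · exact Subsingleton.monotone _
    refine Fin.monotone_iff_le_succ.2 fun i => orderKey_le_orderKey_iff.2 ?_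
    rcases (hanti (Fin.castSucc_le_succ i)).lt_or_eq with hlt | heq
    · exact .inl hlt
    · exact .inr ⟨heq.symm, heven i.castSucc i.succ.2 heq.symm, hodd i.castSucc i.succ.2 heq.symm⟩
  · have hstep := fun i j (hij : i ≤ j) => orderKey_le_orderKey_iff.1 (hmono hij)
    refine ⟨fun i j hij => ?_, fun i h heq => ?_, fun i h heq => ?_⟩
    · rcases hstep i j hij with hlt | ⟨heq, -⟩
      exacts [hlt.le, heq.ge]
    all_goals
      rcases hstep i ⟨i + 1, h⟩ (Fin.mk_le_mk.2 (Nat.le_succ _)) with hlt | ⟨-, hle⟩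
      · exact absurd heq hlt.ne'
    exacts [hle.1, hle.2]

theorem unique_ordered_monomial_in_rho_general (n : ℕ) (p q : Fin n → ℕ)
    (h : ∀ k, Even (p k + q k)) :
    ∃ d : (Fin n ⊕ Fin n) →₀ ℕ,
      (d ∈ (rho n (monXY n p q)).support ∧
        OrderedMon n (fun i => d (Sum.inl i)) (fun i => d (Sum.inr i))) ∧
      (∀ d' : (Fin n ⊕ Fin n) →₀ ℕ,
        d' ∈ (rho n (monXY n p q)).support →
        OrderedMon n (fun i => d' (Sum.inl i)) (fun i => d' (Sum.inr i)) →
        d' = d) ∧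
      rho n (monXY n p q) =
        rho n (monXY n (fun i => d (Sum.inl i)) (fun i => d (Sum.inr i))) := by
  set key : Fin n → ℤ ×ₗ ℤ := fun i => orderKey (p i, q i)
  set τ := Tuple.sort key
  refine ⟨expXY (p ∘ τ) (q ∘ τ), ⟨(mem_support_rho_monXY h _).2 ⟨τ, rfl⟩,
    orderedMon_iff.2 ⟨fun k => h (τ k), Tuple.monotone_sort key⟩⟩, fun d' hd' hord => ?_,
    (rho_monXY_comp h τ).symm⟩
  obtain ⟨π, rfl⟩ := (mem_support_rho_monXY h d').1 hd'
  have hsorted : key ∘ π = key ∘ τ :=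
    Tuple.comp_sort_eq_comp_iff_monotone.2 (orderedMon_iff.1 hord).2
  have hpair := orderKey_injective.comp_left hsorted
  simp only [funext_iff, Prod.mk.injEq] at hpair
  exact congrArg₂ expXY (funext fun i => (hpair i).1) (funext fun i => (hpair i).2)

/-- For a monomial `x^p y^q` with all `p_k + q_k` even, among the monomials appearing
with nonzero coefficient in `ρ(x^p y^q)` there is exactly one ordered monomial
`n(x,y) ∈ 𝒪ₙ`, and moreover `ρ(x^p y^q) = ρ(n(x,y))`. -/
theorem unique_ordered_monomial_in_rho (n : ℕ) (hn : 1 ≤ n) (p q : Fin n → ℕ)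
    (h : ∀ k, Even (p k + q k)) :
    ∃ d : (Fin n ⊕ Fin n) →₀ ℕ,
      (d ∈ (rho n (monXY n p q)).support ∧
        OrderedMon n (fun i => d (Sum.inl i)) (fun i => d (Sum.inr i))) ∧
      (∀ d' : (Fin n ⊕ Fin n) →₀ ℕ,
        d' ∈ (rho n (monXY n p q)).support →
        OrderedMon n (fun i => d' (Sum.inl i)) (fun i => d' (Sum.inr i)) →
        d' = d) ∧
      rho n (monXY n p q) =
        rho n (monXY n (fun i => d (Sum.inl i)) (fun i => d (Sum.inr i))) :=
  unique_ordered_monomial_in_rho_general n p q h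
end
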